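/- Suppose (u_t)_{t∈ℤ} is a sequence of integrable ℝ^d-valued random vectors satisfying (i) E[u_t | u_s, s < t] = 0 almost surely for all t, and (ii) E[(u_t u_τ') ⊗ (u_{τ+k} u_{τ+k}')] = 0 for all τ > t and all k > 0. Then E[u_t u_τ' ⊗ u_{t+l} u_{τ+k}'] = 0 for all t < τ and all l, k > 0. -/

import Mathlib

/-!
In each term `u_t u_τ u_{t+l} u_{τ+k}` with `t < τ` and `l, k > 0`, either the two late times
`t + l` and `τ + k` coincide, which is exactly the fourth-moment restriction, or one of them is
strictly later than the other three indices. In the latter case the other three factors are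
measurable with respect to the past of that time, so conditioning on the past pulls them out and the
martingale-difference property kills the expectation.
-/

open MeasureTheory

namespace MeasureTheory

theorem integral_mul_eq_zero_of_condExp_eq_zero {Ω : Type*} {m mΩ : MeasurableSpace Ω}
    {μ : Measure Ω} (hm : m ≤ mΩ) [SigmaFinite (μ.trim hm)] {f g : Ω → ℝ}
    (hf : AEStronglyMeasurable[m] f μ) (hg : Integrable g μ) (hg₀ : μ[g | m] =ᵐ[μ] 0) :
    ∫ ω, f ω * g ω ∂μ = 0 := by
  by_cases hfg : Integrable (f * g) μ
  · have hpull : μ[f * g | m] =ᵐ[μ] 0 := by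
      filter_upwards [condExp_mul_of_aestronglyMeasurable_left hf hfg hg, hg₀] with ω hω hω₀
      simp [hω, hω₀]
    calc ∫ ω, f ω * g ω ∂μ = ∫ ω, (μ[f * g | m]) ω ∂μ := (integral_condExp hm).symm
      _ = 0 := by simp [integral_congr_ae hpull]
  · exact integral_undef hfg

end MeasureTheory

section Past

variable {Ω β : Type*} [MeasurableSpace β] {u : ℤ → Ω → β}

abbrev pastSigma (u : ℤ → Ω → β) (t : ℤ) : MeasurableSpace Ω :=
  ⨆ s : {s : ℤ // s < t}, MeasurableSpace.comap (u s) inferInstance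

theorem pastSigma_le {mΩ : MeasurableSpace Ω} (hu : ∀ s, Measurable (u s)) (t : ℤ) :
    pastSigma u t ≤ mΩ :=
  iSup_le fun s => (hu s).comap_le

theorem measurable_pastSigma {s t : ℤ} (hst : s < t) : Measurable[pastSigma u t] (u s) :=
  (comap_measurable _).mono
    (le_iSup (fun s : {s : ℤ // s < t} => MeasurableSpace.comap (u s) ‹_›) ⟨s, hst⟩) le_rfl

end Past

theorem integral_mul_mul_mul_eq_zero_of_lt {Ω : Type*} [MeasurableSpace Ω] {μ : Measure Ω}
    [IsFiniteMeasure μ] {d : ℕ} {u : ℤ → Ω → Fin d → ℝ}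
    (hmeas : ∀ t i, Measurable fun ω => u t ω i)
    (hint : ∀ t i, Integrable (fun ω => u t ω i) μ)
    (hmds : ∀ t i, μ[(fun ω => u t ω i) | pastSigma u t] =ᵐ[μ] 0)
    {t s₁ s₂ s₃ : ℤ} (h₁ : s₁ < t) (h₂ : s₂ < t) (h₃ : s₃ < t) (i₁ i₂ i₃ b : Fin d) :
    ∫ ω, u s₁ ω i₁ * u s₂ ω i₂ * u s₃ ω i₃ * u t ω b ∂μ = 0 := by
  have hpast : ∀ {s}, s < t → ∀ i, Measurable[pastSigma u t] fun ω => u s ω i :=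
    fun hs i => (measurable_pi_apply i).comp (measurable_pastSigma hs)
  refine integral_mul_eq_zero_of_condExp_eq_zero
    (pastSigma_le (fun s => measurable_pi_lambda _ (hmeas s)) t) ?_ (hint t b) (hmds t b)
  exact (((hpast h₁ i₁).mul (hpast h₂ i₂)).mul (hpast h₃ i₃)).aestronglyMeasurable

/-- If `(u_t)` is a martingale difference sequence (`E[u_t | u_s, s < t] = 0` a.s.)
satisfying the fourth-moment restriction
`E[(u_t u_τ') ⊗ (u_{τ+k} u_{τ+k}')] = 0` for all `τ > t`, `k > 0`, then
`E[u_t u_τ' ⊗ u_{t+l} u_{τ+k}'] = 0` for all `t < τ` and `l, k > 0`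
(all expectations stated entrywise). -/
theorem kron_fourth_moment_vanishes
    {Ω : Type*} [MeasurableSpace Ω] (μ : Measure Ω) [IsProbabilityMeasure μ]
    {d : ℕ} (u : ℤ → Ω → Fin d → ℝ)
    (hmeas : ∀ t i, Measurable fun ω => u t ω i)
    (hint : ∀ t i, Integrable (fun ω => u t ω i) μ)
    (hmds : ∀ t : ℤ, ∀ i : Fin d,
      μ[(fun ω => u t ω i) |
        ⨆ s : {s : ℤ // s < t}, MeasurableSpace.comap (u s) inferInstance] =ᵐ[μ] 0)
    (hfourth : ∀ t τ : ℤ, t < τ → ∀ k : ℤ, 0 < k → ∀ i j a b : Fin d,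
      ∫ ω, u t ω i * u τ ω j * (u (τ + k) ω a * u (τ + k) ω b) ∂μ = 0) :
    ∀ t τ : ℤ, t < τ → ∀ l k : ℤ, 0 < l → 0 < k → ∀ i j a b : Fin d,
      ∫ ω, u t ω i * u τ ω j * (u (t + l) ω a * u (τ + k) ω b) ∂μ = 0 := by
  intro t τ htτ l k hl hk i j a b
  rcases lt_trichotomy (t + l) (τ + k) with hlt | heq | hgt
  · simp_rw [← mul_assoc]
    exact integral_mul_mul_mul_eq_zero_of_lt hmeas hint hmds (by omega) (by omega) hlt i j a b
  · rw [heq]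
    exact hfourth t τ htτ k hk i j a b
  · simp_rw [mul_comm (u (t + l) _ a), ← mul_assoc]
    exact integral_mul_mul_mul_eq_zero_of_lt hmeas hint hmds (by omega) (by omega) hgt i j b a
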